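/- arXiv:2506.13402 — 4 statements merged into one kernel-verified Lean document; each statement's English description precedes it below -/
import Mathlib

section
/- If 0 ≤ g, 0 ≤ h, x² + y² ≤ z², g² + h² = x² + y², z > 0, and g·cos θ + h·sin θ ≥ z·cos θ for some θ ∈ [0, π/2], then -sin² θ ≤ (x² + y² - z²)/z² ≤ 0. -/
theorem qpr_eps_feasible (x y z g h θ : ℝ)
    (hg : 0 ≤ g) (hh : 0 ≤ h)
    (hsoc : x ^ 2 + y ^ 2 ≤ z ^ 2)
    (hnorm : g ^ 2 + h ^ 2 = x ^ 2 + y ^ 2)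
    (hz0 : 0 ≤ z)
    (hθ : θ ∈ Set.Icc 0 (Real.pi / 2))
    (hcut : g * Real.cos θ + h * Real.sin θ ≥ z * Real.cos θ)
    (hz : 0 < z) :
    -Real.sin θ ^ 2 ≤ (x ^ 2 + y ^ 2 - z ^ 2) / z ^ 2 ∧
      (x ^ 2 + y ^ 2 - z ^ 2) / z ^ 2 ≤ 0 := by
  obtain ⟨h0, h1⟩ := hθ
  have hc : 0 ≤ Real.cos θ := Real.cos_nonneg_of_mem_Icc ⟨by linarith [Real.pi_pos], h1⟩
  have hs : 0 ≤ Real.sin θ := Real.sin_nonneg_of_nonneg_of_le_pi h0 (by linarith [Real.pi_pos])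
  have hpy : Real.sin θ ^ 2 + Real.cos θ ^ 2 = 1 := Real.sin_sq_add_cos_sq θ
  have hz2 : (0:ℝ) < z ^ 2 := by positivity
  have cs : (g * Real.cos θ + h * Real.sin θ) ^ 2 ≤ (g ^ 2 + h ^ 2) := by
    nlinarith [sq_nonneg (g * Real.sin θ - h * Real.cos θ)]
  constructor
  · rw [le_div_iff₀ hz2]
    nlinarith [mul_nonneg hz0 hc, mul_le_mul_of_nonneg_left hcut (mul_nonneg hz0 hc),
      mul_le_mul hcut hcut (mul_nonneg hz0 hc) (by positivity)]
  · exact div_nonpos_of_nonpos_of_nonneg (by linarith) hz2.le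
end

section
/- Let θ_K = π/2^(K+1) and θ_{K+1} = π/2^(K+2), and let z > 0. Define R = {(g,h) ∈ ℝ² : g ≥ 0, h ≥ 0, g ≤ z, g·cos θ_K + h·sin θ_K ≤ z, g·cos θ_{K+1} + h·sin θ_{K+1} ≥ z·cos θ_{K+1}}. Then for all (g,h) ∈ R, g² + h² ≤ z²·sec² θ_{K+1} = z²(1 + tan² θ_{K+1}). -/
set_option maxHeartbeats 1000000 in
theorem pr_upper_bound (K : ℕ) (z g h : ℝ) (hz : 0 < z)
    (θK θK1 : ℝ)
    (hθK : θK = Real.pi / 2 ^ (K + 1))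
    (hθK1 : θK1 = Real.pi / 2 ^ (K + 2))
    (hg0 : 0 ≤ g) (hh0 : 0 ≤ h)
    (hgz : g ≤ z)
    (houter : g * Real.cos θK + h * Real.sin θK ≤ z)
    (hinner : g * Real.cos θK1 + h * Real.sin θK1 ≥ z * Real.cos θK1) :
    g ^ 2 + h ^ 2 ≤ z ^ 2 * (1 + Real.tan θK1 ^ 2) := by
  have hpi := Real.pi_pos
  have hpow : (0:ℝ) < 2 ^ (K + 2) := by positivity
  have hθpos : 0 < θK1 := by rw [hθK1]; positivity
  have hθlt : θK1 < Real.pi / 2 := by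
    rw [hθK1]
    rw [div_lt_div_iff₀ hpow (by norm_num)]
    have : (4:ℝ) ≤ 2 ^ (K + 2) := by
      calc (4:ℝ) = 2 ^ 2 := by norm_num
      _ ≤ 2 ^ (K + 2) := by
        apply pow_le_pow_right₀ (by norm_num)
        omega
    nlinarith
  have hdouble : θK = 2 * θK1 := by
    rw [hθK, hθK1, pow_succ]
    ring
  set s := Real.sin θK1 with hs
  set c := Real.cos θK1 with hc
  have hs0 : 0 < s := Real.sin_pos_of_pos_of_lt_pi hθpos (by linarith)
  have hc0 : 0 < c := Real.cos_pos_of_mem_Ioo ⟨by linarith, hθlt⟩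
  have hpy : s ^ 2 + c ^ 2 = 1 := Real.sin_sq_add_cos_sq θK1
  have hcos2 : Real.cos θK = 2 * c ^ 2 - 1 := by
    rw [hdouble, Real.cos_two_mul]
  have hsin2 : Real.sin θK = 2 * s * c := by
    rw [hdouble, Real.sin_two_mul]
  have htan : Real.tan θK1 = s / c := Real.tan_eq_sin_div_cos θK1
  rw [htan]
  rw [hcos2, hsin2] at houter
  have key : c ^ 2 * (g ^ 2 + h ^ 2) ≤ z ^ 2 := by
    -- inner: h * s ≥ c * (z - g)
    have h1 : c * (z - g) ≤ h * s := by nlinarith [hinner]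
    -- lower bound on g: g ≥ z * (2c² - 1)
    have h2 : z * (2 * c ^ 2 - 1) ≤ g := by
      nlinarith [mul_le_mul_of_nonneg_left h1 (le_of_lt hc0)]
    -- upper bound: 2*s*c*h ≤ z - g*(2c²-1)
    have h3 : 2 * s * c * h ≤ z - g * (2 * c ^ 2 - 1) := by nlinarith [houter]
    have hlhs0 : 0 ≤ 2 * s * c * h := by positivity
    have h3sq : (2 * s * c * h) ^ 2 ≤ (z - g * (2 * c ^ 2 - 1)) ^ 2 := by
      nlinarith [h3, hlhs0]
    -- g ≥ z*(1 - 4s²)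
    have h2' : 0 ≤ g - z * (1 - 4 * s ^ 2) := by nlinarith [h2, hpy, sq_nonneg s, mul_nonneg hz.le (sq_nonneg s)]
    -- F(g) = (g - z)(g - z(1-4s²)) ≤ 0, i.e. the quadratic bound
    have hF : (z - g * (2 * c ^ 2 - 1)) ^ 2 + 4 * s ^ 2 * c ^ 2 * g ^ 2 ≤ 4 * s ^ 2 * z ^ 2 := by
      have hprod : 0 ≤ (z - g) * (g - z * (1 - 4 * s ^ 2)) :=
        mul_nonneg (sub_nonneg.2 hgz) h2'
      have hc2e : c ^ 2 = 1 - s ^ 2 := by linarith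
      rw [hc2e]
      nlinarith [hprod]
    have hs2 : (0:ℝ) < 4 * s ^ 2 := by positivity
    have h4 : 4 * s ^ 2 * (c ^ 2 * (g ^ 2 + h ^ 2)) ≤ 4 * s ^ 2 * z ^ 2 := by
      linarith [h3sq, hF]
    exact le_of_mul_le_mul_left h4 hs2
  have hc2 : (0:ℝ) < c ^ 2 := by positivity
  have heq : z ^ 2 * (1 + (s / c) ^ 2) = z ^ 2 * (c ^ 2 + s ^ 2) / c ^ 2 := by
    field_simp
  rw [heq, le_div_iff₀ hc2]
  nlinarith [key]
end

section
/- Let θ_n = π/2^(n+1) for n ≥ 0, let z ≥ 0, and suppose sequences (g_n), (h_n) satisfy 0 ≤ g_0 ≤ z, 0 ≤ h_0 ≤ z, and for n ≥ 1: g_n = cos θ_n · g_{n−1} + sin θ_n · h_{n−1}, h_n = |−sin θ_n · g_{n−1} + cos θ_n · h_{n−1}|, g_n ≤ z. Then for every n ≤ K, g_n · cos θ_n + h_n · sin θ_n ≤ z. -/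
theorem rnf_outer_facet (K : ℕ) (z : ℝ) (hz : 0 ≤ z)
    (θ : ℕ → ℝ) (hθ : ∀ n, θ n = Real.pi / 2 ^ (n + 1))
    (g h : ℕ → ℝ)
    (hg0 : 0 ≤ g 0) (hg0' : g 0 ≤ z)
    (hh0 : 0 ≤ h 0) (hh0' : h 0 ≤ z)
    (hrec_g : ∀ n, 1 ≤ n → g n = Real.cos (θ n) * g (n - 1) + Real.sin (θ n) * h (n - 1))
    (hrec_h : ∀ n, 1 ≤ n → h n = |(-Real.sin (θ n)) * g (n - 1) + Real.cos (θ n) * h (n - 1)|)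
    (hgz : ∀ n, 1 ≤ n → g n ≤ z) :
    ∀ n ≤ K, g n * Real.cos (θ n) + h n * Real.sin (θ n) ≤ z := by
  have key : ∀ n, g n * Real.cos (θ n) + h n * Real.sin (θ n) ≤ z := by
    intro n
    induction n with
    | zero =>
      rw [hθ 0]
      norm_num [Real.cos_pi_div_two, Real.sin_pi_div_two]
      exact hh0'
    | succ n ih =>
      set c := Real.cos (θ (n + 1)) with hc
      set s := Real.sin (θ (n + 1)) with hsdef
      have hdouble : θ n = 2 * θ (n + 1) := by
        rw [hθ, hθ]; ring
      have hcos : Real.cos (θ n) = c ^ 2 - s ^ 2 := by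
        rw [hdouble, Real.cos_two_mul']
      have hsin : Real.sin (θ n) = 2 * s * c := by
        rw [hdouble, Real.sin_two_mul, mul_comm]
      have pyth : s ^ 2 + c ^ 2 = 1 := Real.sin_sq_add_cos_sq _
      have hg : g (n + 1) = c * g n + s * h n := by
        simpa using hrec_g (n + 1) (by omega)
      have hh : h (n + 1) = |(-s) * g n + c * h n| := by
        simpa using hrec_h (n + 1) (by omega)
      have hgn : g n ≤ z := by
        cases n with
        | zero => exact hg0'
        | succ m => exact hgz _ (by omega)
      rw [hcos, hsin] at ih
      rcases abs_cases ((-s) * g n + c * h n) with ⟨he, _⟩ | ⟨he, _⟩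
      · rw [hg, hh, he]
        nlinarith [ih]
      · rw [hg, hh, he]
        nlinarith [hgn, pyth]
  intro n _
  exact key n
end

section
/- Let N = 2^(K+1) with K ≥ 1, φ_n = 2(n−1)π/N for n = 1,…,N, and z > 0. If (x, y) = Σ_{n=1}^N ω_n · z·(cos φ_n, sin φ_n) where ω_n ≥ 0, Σ ω_n ≤ 1, and at most two consecutive ω_n (cyclically) are nonzero, then x² + y² ≤ z², with x² + y² ≥ z² cos²(π/N) · (Σ ω_n)². -/
theorem sos2_polygon_bounds (K : ℕ) (hK : 1 ≤ K) (z : ℝ) (hz : 0 < z)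
    (N : ℕ) (hN : N = 2 ^ (K + 1))
    (ω : Fin N → ℝ) (hω : ∀ n, 0 ≤ ω n) (hsum : ∑ n, ω n ≤ 1)
    (hadj : ∃ m : Fin N, ∀ n, ω n ≠ 0 → n = m ∨ n.val = (m.val + 1) % N)
    (x y : ℝ)
    (hx : x = ∑ n, ω n * (z * Real.cos (2 * (n : ℝ) * Real.pi / N)))
    (hy : y = ∑ n, ω n * (z * Real.sin (2 * (n : ℝ) * Real.pi / N))) :
    x ^ 2 + y ^ 2 ≤ z ^ 2 ∧
      z ^ 2 * Real.cos (Real.pi / N) ^ 2 * (∑ n, ω n) ^ 2 ≤ x ^ 2 + y ^ 2 := by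
  obtain ⟨m, hm⟩ := hadj
  have hN4 : 4 ≤ N := by
    rw [hN]
    calc (4:ℕ) = 2 ^ 2 := rfl
    _ ≤ 2 ^ (K + 1) := Nat.pow_le_pow_right (by norm_num) (by omega)
  have hN0 : 0 < N := by omega
  have hNR : (N : ℝ) ≠ 0 := by positivity
  set m' : Fin N := ⟨(m.val + 1) % N, Nat.mod_lt _ hN0⟩ with hm'
  have hne : m ≠ m' := by
    intro h
    have : m.val = (m.val + 1) % N := congrArg Fin.val h
    rcases Nat.lt_or_ge (m.val + 1) N with h1 | h1
    · rw [Nat.mod_eq_of_lt h1] at this; omega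
    · have hmv : m.val + 1 = N := by omega
      rw [hmv, Nat.mod_self] at this
      omega
  have hkey : ∀ f : Fin N → ℝ, ∑ n, ω n * f n = ω m * f m + ω m' * f m' := by
    intro f
    rw [← Finset.sum_subset (Finset.subset_univ {m, m'})]
    · rw [Finset.sum_pair hne]
    · intro n _ hn
      simp only [Finset.mem_insert, Finset.mem_singleton] at hn
      push_neg at hn
      by_contra h
      have hωn : ω n ≠ 0 := fun h0 => h (by rw [h0, zero_mul])
      rcases hm n hωn with h1 | h1
      · exact hn.1 h1
      · exact hn.2 (Fin.ext h1)
  have hS : ∑ n, ω n = ω m + ω m' := by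
    have := hkey (fun _ => 1)
    simpa using this
  set a := ω m
  set b := ω m'
  set π := Real.pi
  set θ : ℝ := 2 * (m.val : ℝ) * π / N with hθ
  set θ' : ℝ := 2 * (m'.val : ℝ) * π / N with hθ'
  have hxab : x = a * (z * Real.cos θ) + b * (z * Real.cos θ') := by
    rw [hx, hkey]
  have hyab : y = a * (z * Real.sin θ) + b * (z * Real.sin θ') := by
    rw [hy, hkey]
  have hcos : Real.cos θ * Real.cos θ' + Real.sin θ * Real.sin θ'
      = Real.cos (2 * π / N) := by
    rw [← Real.cos_sub]
    rcases Nat.lt_or_ge (m.val + 1) N with h1 | h1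
    · have hmv : (m'.val : ℝ) = (m.val : ℝ) + 1 := by
        simp [hm', Nat.mod_eq_of_lt h1]
      have : θ - θ' = -(2 * π / N) := by
        rw [hθ, hθ', hmv]; field_simp; ring
      rw [this, Real.cos_neg]
    · have hmv : m.val + 1 = N := by omega
      have hm'0 : (m'.val : ℝ) = 0 := by simp [hm', hmv]
      have hmN : (m.val : ℝ) = (N : ℝ) - 1 := by
        have : (m.val : ℝ) + 1 = N := by exact_mod_cast congrArg Nat.cast hmv
        linarith
      have : θ - θ' = 2 * π - 2 * π / N := by
        rw [hθ, hθ', hm'0, hmN]; field_simp; ring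
      rw [this]
      rw [show 2 * π - 2 * π / N = -(2 * π / N) + 2 * π by ring]
      rw [Real.cos_add_two_pi, Real.cos_neg]
  have hsq : x ^ 2 + y ^ 2
      = z ^ 2 * (a ^ 2 + b ^ 2 + 2 * a * b * Real.cos (2 * π / N)) := by
    have hc : Real.cos θ ^ 2 + Real.sin θ ^ 2 = 1 := Real.cos_sq_add_sin_sq θ
    have hc' : Real.cos θ' ^ 2 + Real.sin θ' ^ 2 = 1 := Real.cos_sq_add_sin_sq θ'
    have expand : x ^ 2 + y ^ 2
        = z ^ 2 * (a ^ 2 * (Real.cos θ ^ 2 + Real.sin θ ^ 2)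
          + b ^ 2 * (Real.cos θ' ^ 2 + Real.sin θ' ^ 2)
          + 2 * a * b * (Real.cos θ * Real.cos θ' + Real.sin θ * Real.sin θ')) := by
      rw [hxab, hyab]; ring
    rw [expand, hc, hc', hcos]; ring
  have hdouble : Real.cos (2 * π / N) = 2 * Real.cos (π / N) ^ 2 - 1 := by
    rw [show 2 * π / (N:ℝ) = 2 * (π / N) by ring, Real.cos_two_mul]
  have ha : 0 ≤ a := hω m
  have hb : 0 ≤ b := hω m'
  have hab1 : a + b ≤ 1 := by rw [hS] at hsum; exact hsum
  have hcle : Real.cos (π / N) ^ 2 ≤ 1 := by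
    nlinarith [Real.cos_le_one (π / N), Real.neg_one_le_cos (π / N)]
  set c := Real.cos (π / N) ^ 2 with hc
  have hc0 : 0 ≤ c := sq_nonneg _
  constructor
  · rw [hsq, hdouble]
    have h1 : a ^ 2 + b ^ 2 + 2 * a * b * (2 * c - 1) ≤ 1 := by
      nlinarith [mul_nonneg ha hb, mul_nonneg (mul_nonneg ha hb) (sub_nonneg.2 hcle)]
    calc z ^ 2 * (a ^ 2 + b ^ 2 + 2 * a * b * (2 * c - 1))
        ≤ z ^ 2 * 1 := by
          exact mul_le_mul_of_nonneg_left h1 (sq_nonneg z)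
      _ = z ^ 2 := by ring
  · rw [hsq, hdouble, hS]
    have key : z ^ 2 * (a ^ 2 + b ^ 2 + 2 * a * b * (2 * c - 1))
        - z ^ 2 * c * (a + b) ^ 2
        = z ^ 2 * (1 - c) * (a - b) ^ 2 := by ring
    nlinarith [mul_nonneg (mul_nonneg (sq_nonneg z) (sub_nonneg.2 hcle)) (sq_nonneg (a - b)), key]
end
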